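/- arXiv:1505.00087 — 2 statements merged into one kernel-verified Lean document; each statement's English description precedes it below -/
import Mathlib

section
/- Let {u₁, …, uₙ} be an orthonormal set in ℝ^m with uᵢ = (u_{ij}), and let A₁, …, Aₙ ∈ M_p(ℂ) be Hermitian. Set Bⱼ = Σᵢ u_{ij} Aᵢ. Then each Bⱼ is Hermitian, and for any positive semidefinite A₀ ∈ M_p(ℂ): -A₀ ⊗ conj(A₀) ≤ Σⱼ Bⱼ ⊗ conj(Bⱼ) ≤ A₀ ⊗ conj(A₀) holds if and only if -A₀ ⊗ conj(A₀) ≤ Σᵢ Aᵢ ⊗ conj(Aᵢ) ≤ A₀ ⊗ conj(A₀). -/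
/-!
Since the `uᵢ` are orthonormal, `Σⱼ u_{ij} u_{kj} = δ_{ik}`. Expanding `Bⱼ ⊗ conj(Bⱼ)`
bilinearly (the coefficients are real, so conjugation leaves them alone) and summing over `j`
therefore gives `Σⱼ Bⱼ ⊗ conj(Bⱼ) = Σᵢ Aᵢ ⊗ conj(Aᵢ)`: the two pairs of inequalities are the same.
-/

open Matrix
open scoped ComplexOrder
open scoped Kronecker

namespace Matrix

variable {R ι κ l : Type*} [CommSemiring R] [Fintype ι] [Fintype κ]

theorem sum_kronecker_sum_smul (u v : ι → κ → R) (A B : ι → Matrix l l R) :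
    ∑ j, (∑ i, u i j • A i) ⊗ₖ (∑ k, v k j • B k) =
      ∑ i, ∑ k, (∑ j, u i j * v k j) • (A i ⊗ₖ B k) := by
  ext ⟨a, a'⟩ ⟨b, b'⟩
  simp only [sum_apply, kroneckerMap_apply, smul_apply, smul_eq_mul, Finset.sum_mul_sum]
  simp only [Finset.sum_mul]
  rw [Finset.sum_comm]
  refine Finset.sum_congr rfl fun i _ => ?_
  rw [Finset.sum_comm]
  exact Finset.sum_congr rfl fun k _ => Finset.sum_congr rfl fun j _ => by ring

theorem sum_kronecker_sum_smul_of_orthonormal [DecidableEq ι] (u v : ι → κ → R)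
    (huv : ∀ i k, ∑ j, u i j * v k j = if i = k then 1 else 0) (A B : ι → Matrix l l R) :
    ∑ j, (∑ i, u i j • A i) ⊗ₖ (∑ k, v k j • B k) = ∑ i, A i ⊗ₖ B i := by
  simp [sum_kronecker_sum_smul, huv, ite_smul]

theorem map_conj_sum_ofReal_smul (c : ι → ℝ) (A : ι → Matrix l l ℂ) :
    (∑ i, (c i : ℂ) • A i).map (starRingEnd ℂ) = ∑ i, (c i : ℂ) • (A i).map (starRingEnd ℂ) := by
  ext a b
  simp [sum_apply]

theorem isHermitian_sum_ofReal_smul (c : ι → ℝ) {A : ι → Matrix l l ℂ}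
    (hA : ∀ i, (A i).IsHermitian) : (∑ i, (c i : ℂ) • A i).IsHermitian :=
  isSelfAdjoint_sum _ fun i _ => (hA i).smul (Complex.conj_ofReal _)

end Matrix

theorem stmt11_general {n m p : ℕ} (u : Fin n → Fin m → ℝ)
    (hu : ∀ i k, ∑ j, u i j * u k j = if i = k then 1 else 0)
    (A : Fin n → Matrix (Fin p) (Fin p) ℂ) (hA : ∀ i, (A i).IsHermitian)
    (A₀ : Matrix (Fin p) (Fin p) ℂ) :
    (∀ j, (∑ i, (u i j : ℂ) • A i).IsHermitian) ∧
    (((A₀ ⊗ₖ A₀.map (starRingEnd ℂ) -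
        ∑ j, (∑ i, (u i j : ℂ) • A i) ⊗ₖ (∑ i, (u i j : ℂ) • A i).map (starRingEnd ℂ)).PosSemidef ∧
      (A₀ ⊗ₖ A₀.map (starRingEnd ℂ) +
        ∑ j, (∑ i, (u i j : ℂ) • A i) ⊗ₖ (∑ i, (u i j : ℂ) • A i).map (starRingEnd ℂ)).PosSemidef) ↔
     ((A₀ ⊗ₖ A₀.map (starRingEnd ℂ) - ∑ i, A i ⊗ₖ (A i).map (starRingEnd ℂ)).PosSemidef ∧
      (A₀ ⊗ₖ A₀.map (starRingEnd ℂ) + ∑ i, A i ⊗ₖ (A i).map (starRingEnd ℂ)).PosSemidef)) := by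
  have huC : ∀ i k, ∑ j, (u i j : ℂ) * u k j = if i = k then 1 else 0 := fun i k => by
    simpa [apply_ite] using congrArg ((↑) : ℝ → ℂ) (hu i k)
  have hsum : ∑ j, (∑ i, (u i j : ℂ) • A i) ⊗ₖ (∑ i, (u i j : ℂ) • A i).map (starRingEnd ℂ) =
      ∑ i, A i ⊗ₖ (A i).map (starRingEnd ℂ) := by
    simp only [map_conj_sum_ofReal_smul]
    exact sum_kronecker_sum_smul_of_orthonormal _ _ huC _ _
  exact ⟨fun j => isHermitian_sum_ofReal_smul (u · j) hA, by rw [hsum]⟩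

theorem stmt11 {n m p : ℕ} (u : Fin n → Fin m → ℝ)
    (hu : ∀ i k, ∑ j, u i j * u k j = if i = k then 1 else 0)
    (A : Fin n → Matrix (Fin p) (Fin p) ℂ) (hA : ∀ i, (A i).IsHermitian)
    (A₀ : Matrix (Fin p) (Fin p) ℂ) (hA₀ : A₀.PosSemidef) :
    (∀ j, (∑ i, (u i j : ℂ) • A i).IsHermitian) ∧
    (((A₀ ⊗ₖ A₀.map (starRingEnd ℂ) -
        ∑ j, (∑ i, (u i j : ℂ) • A i) ⊗ₖ (∑ i, (u i j : ℂ) • A i).map (starRingEnd ℂ)).PosSemidef ∧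
      (A₀ ⊗ₖ A₀.map (starRingEnd ℂ) +
        ∑ j, (∑ i, (u i j : ℂ) • A i) ⊗ₖ (∑ i, (u i j : ℂ) • A i).map (starRingEnd ℂ)).PosSemidef) ↔
     ((A₀ ⊗ₖ A₀.map (starRingEnd ℂ) - ∑ i, A i ⊗ₖ (A i).map (starRingEnd ℂ)).PosSemidef ∧
      (A₀ ⊗ₖ A₀.map (starRingEnd ℂ) + ∑ i, A i ⊗ₖ (A i).map (starRingEnd ℂ)).PosSemidef)) :=
  stmt11_general u hu A hA A₀
end

section
/- Let H be a Hilbert space and let a₁, …, aₙ and b₁, …, bₙ be bounded operators on H. Then ‖Σᵢ aᵢ ⊗ bᵢ‖ ≤ ‖Σᵢ aᵢ aᵢ*‖^{1/2} · ‖Σᵢ bᵢ* bᵢ‖^{1/2}, where the left norm is the operator norm on H ⊗ H (or the norm in any C*-tensor product). -/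
open Matrix
open scoped Matrix.Norms.L2Operator Kronecker

/-!
Write `∑ aᵢ ⊗ bᵢ = A B`, where the block row `A = [a₁ ⊗ 1 ⋯ aₙ ⊗ 1]` and the block column
`B = [1 ⊗ b₁; ⋯; 1 ⊗ bₙ]`. Then `A Aᴴ = (∑ aᵢ aᵢᴴ) ⊗ 1` and `Bᴴ B = 1 ⊗ ∑ bᵢᴴ bᵢ`, so the
C⋆-identity gives `‖∑ aᵢ ⊗ bᵢ‖ ≤ ‖A‖ ‖B‖ = ‖A Aᴴ‖^{1/2} ‖Bᴴ B‖^{1/2}`; finally `X ↦ X ⊗ 1` and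
`Y ↦ 1 ⊗ Y` are `⋆`-homomorphisms of C⋆-algebras, hence contractive.
-/

namespace Matrix

variable {ι l m k α : Type*}

def blockRow (x : ι → Matrix l m α) : Matrix l (ι × m) α :=
  of fun r ic => x ic.1 r ic.2

def blockCol (y : ι → Matrix m k α) : Matrix (ι × m) k α :=
  of fun ic c => y ic.1 ic.2 c

theorem blockRow_mul_blockCol [Fintype ι] [Fintype m] [NonUnitalNonAssocSemiring α]
    (x : ι → Matrix l m α) (y : ι → Matrix m k α) :
    blockRow x * blockCol y = ∑ i, x i * y i := by
  ext r c
  simp only [blockRow, blockCol, mul_apply, of_apply, Fintype.sum_prod_type, sum_apply]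

theorem conjTranspose_blockRow [Star α] (x : ι → Matrix l m α) :
    (blockRow x)ᴴ = blockCol fun i => (x i)ᴴ := rfl

theorem conjTranspose_blockCol [Star α] (y : ι → Matrix m k α) :
    (blockCol y)ᴴ = blockRow fun i => (y i)ᴴ := rfl

section L2OpNorm

variable {𝕜 : Type*} [RCLike 𝕜] [Fintype l] [Fintype m] [Fintype k]

theorem l2_opNorm_eq_sqrt_mul_conjTranspose [DecidableEq l] [DecidableEq m] (A : Matrix l m 𝕜) :
    ‖A‖ = √‖A * Aᴴ‖ := by
  rw [← conjTranspose_conjTranspose A, conjTranspose_conjTranspose Aᴴ,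
    l2_opNorm_conjTranspose_mul_self, l2_opNorm_conjTranspose, Real.sqrt_mul_self (norm_nonneg _)]

theorem l2_opNorm_eq_sqrt_conjTranspose_mul [DecidableEq m] (A : Matrix l m 𝕜) :
    ‖A‖ = √‖Aᴴ * A‖ := by
  rw [l2_opNorm_conjTranspose_mul_self, Real.sqrt_mul_self (norm_nonneg _)]

theorem l2_opNorm_sum_mul_le [Fintype ι] [DecidableEq l] [DecidableEq k]
    (x : ι → Matrix l m 𝕜) (y : ι → Matrix m k 𝕜) :
    ‖∑ i, x i * y i‖ ≤ √‖∑ i, x i * (x i)ᴴ‖ * √‖∑ i, (y i)ᴴ * y i‖ := by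
  classical
  calc ‖∑ i, x i * y i‖ = ‖blockRow x * blockCol y‖ := by rw [blockRow_mul_blockCol]
    _ ≤ ‖blockRow x‖ * ‖blockCol y‖ := l2_opNorm_mul _ _
    _ = √‖∑ i, x i * (x i)ᴴ‖ * √‖∑ i, (y i)ᴴ * y i‖ := by
      rw [l2_opNorm_eq_sqrt_mul_conjTranspose (blockRow x), conjTranspose_blockRow,
        blockRow_mul_blockCol, l2_opNorm_eq_sqrt_conjTranspose_mul (blockCol y),
        conjTranspose_blockCol, blockRow_mul_blockCol]

end L2OpNorm

section KroneckerOne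

variable (R : Type*) {n : Type*} [CommSemiring R] [StarRing R] [Fintype m] [Fintype n]
  [DecidableEq m] [DecidableEq n]

@[simps]
def kroneckerOneStarAlgHom : Matrix m m R →⋆ₐ[R] Matrix (m × n) (m × n) R where
  toFun X := X ⊗ₖ 1
  map_one' := one_kronecker_one
  map_mul' X Y := by rw [← mul_kronecker_mul, mul_one]
  map_zero' := zero_kronecker _
  map_add' X Y := add_kronecker X Y _
  commutes' r := by
    rw [Algebra.algebraMap_eq_smul_one, Algebra.algebraMap_eq_smul_one, smul_kronecker,
      one_kronecker_one]
  map_star' X := by simp only [star_eq_conjTranspose, conjTranspose_kronecker, conjTranspose_one]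

@[simps]
def oneKroneckerStarAlgHom : Matrix n n R →⋆ₐ[R] Matrix (m × n) (m × n) R where
  toFun Y := 1 ⊗ₖ Y
  map_one' := one_kronecker_one
  map_mul' X Y := by rw [← mul_kronecker_mul, mul_one]
  map_zero' := kronecker_zero _
  map_add' X Y := kronecker_add _ X Y
  commutes' r := by
    rw [Algebra.algebraMap_eq_smul_one, Algebra.algebraMap_eq_smul_one, kronecker_smul,
      one_kronecker_one]
  map_star' X := by simp only [star_eq_conjTranspose, conjTranspose_kronecker, conjTranspose_one]

end KroneckerOne

end Matrix

theorem stmt17 {n p q : ℕ} (a : Fin n → Matrix (Fin p) (Fin p) ℂ)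
    (b : Fin n → Matrix (Fin q) (Fin q) ℂ) :
    ‖∑ i, a i ⊗ₖ b i‖ ≤
      Real.sqrt ‖∑ i, a i * (a i)ᴴ‖ * Real.sqrt ‖∑ i, (b i)ᴴ * b i‖ := by
  set φ := kroneckerOneStarAlgHom ℂ (m := Fin p) (n := Fin q)
  set ψ := oneKroneckerStarAlgHom ℂ (m := Fin p) (n := Fin q)
  calc ‖∑ i, a i ⊗ₖ b i‖ = ‖∑ i, φ (a i) * ψ (b i)‖ := by
        simp only [φ, ψ, kroneckerOneStarAlgHom_apply, oneKroneckerStarAlgHom_apply,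
          ← mul_kronecker_mul, mul_one, one_mul]
    _ ≤ √‖∑ i, φ (a i) * (φ (a i))ᴴ‖ * √‖∑ i, (ψ (b i))ᴴ * ψ (b i)‖ :=
        l2_opNorm_sum_mul_le _ _
    _ = √‖φ (∑ i, a i * (a i)ᴴ)‖ * √‖ψ (∑ i, (b i)ᴴ * b i)‖ := by
        simp only [← star_eq_conjTranspose, ← map_star, ← map_mul, ← map_sum]
    _ ≤ √‖∑ i, a i * (a i)ᴴ‖ * √‖∑ i, (b i)ᴴ * b i‖ := by
        gcongr <;> exact NonUnitalStarAlgHom.norm_apply_le _ _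
end
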